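/- Let 0 < r < 1 and let (T₁,…,T_d) be a tuple of invertible bounded operators on a complex Hilbert space H. Then (T₁,…,T_d) is a doubly commuting tuple of operators in C_{1,r} if and only if there exist a tuple (U₁,…,U_d) of commuting unitary operators on H and a tuple (D₁,…,D_d) of commuting self-adjoint invertible operators on H with spectrum σ(D_j) ⊆ { z ∈ ℂ : r ≤ |z| ≤ 1 } for each j, such that D_iU_j = U_jD_i for all i ≠ j and T_j = U_jD_j for each j = 1,…,d. -/

import Mathlib

open ContinuousLinearMap

variable {H : Type*} [NormedAddCommGroup H] [InnerProductSpace ℂ H] [CompleteSpace H]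

/-- `T ∈ C_{1,r}`: `T` is invertible, `‖T‖ ≤ 1` and `‖r • T⁻¹‖ ≤ 1`. -/
def MemC1r (r : ℝ) (T : H →L[ℂ] H) : Prop :=
  IsUnit T ∧ ‖T‖ ≤ 1 ∧ ‖(r : ℂ) • Ring.inverse T‖ ≤ 1

/-- `T ∈ QA_r`: `T` is invertible, `‖r • T‖ ≤ 1` and `‖r • T⁻¹‖ ≤ 1`. -/
def MemQA (r : ℝ) (T : H →L[ℂ] H) : Prop :=
  IsUnit T ∧ ‖(r : ℂ) • T‖ ≤ 1 ∧ ‖(r : ℂ) • Ring.inverse T‖ ≤ 1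

/-- A tuple of operators is doubly commuting if `TᵢTⱼ = TⱼTᵢ` and `TᵢTⱼ* = Tⱼ*Tᵢ` for `i ≠ j`. -/
def DoublyCommuting {d : ℕ} (T : Fin d → H →L[ℂ] H) : Prop :=
  ∀ i j, i ≠ j → T i * T j = T j * T i ∧ T i * adjoint (T j) = adjoint (T j) * T i

/-! The decomposition is the polar decomposition `Tⱼ = Uⱼ |Tⱼ|` with `Uⱼ = Tⱼ |Tⱼ|⁻¹`. Multiplying
by a unitary changes neither the norm of an operator nor that of its inverse, so `T ∈ C_{1,r}` iff
`‖|T|‖ ≤ 1` and `‖|T|⁻¹‖ ≤ 1/r`; as `|T|` is selfadjoint its norm is its spectral radius, and this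
says exactly that `σ(|T|) ⊆ [r, 1]`. If `a` commutes with `b` and `b*`, the continuous functional
calculus makes it commute with `|b|`, `|b|⁻¹` and `b |b|⁻¹`; the relation is symmetric in `a` and
`b`, so all polar factors of `Tᵢ` and `Tⱼ` commute. Conversely, an element commuting with a unitary
or a selfadjoint element also commutes with its adjoint, so the `Uⱼ Dⱼ` doubly commute. -/

open scoped Ring

theorem Commute.ringInverse_right {M₀ : Type*} [MonoidWithZero M₀] {a b : M₀}
    (h : Commute a b) : Commute a b⁻¹ʳ := by
  by_cases hb : IsUnit b
  · rw [Ring.inverse_of_isUnit hb]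
    exact Commute.units_inv_right h
  · rw [Ring.inverse_non_unit b hb]
    exact Commute.zero_right a

section DoublyCommute

variable {A : Type*}

def DoublyCommute [Mul A] [Star A] (a b : A) : Prop :=
  Commute a b ∧ Commute a (star b)

variable [Monoid A] [StarMul A] {a b c : A}

theorem DoublyCommute.symm (h : DoublyCommute a b) : DoublyCommute b a :=
  ⟨h.1.symm, h.2.star_left.symm⟩

theorem DoublyCommute.mul_right (hb : DoublyCommute a b) (hc : DoublyCommute a c) :
    DoublyCommute a (b * c) :=
  ⟨hb.1.mul_right hc.1, by rw [star_mul]; exact hc.2.mul_right hb.2⟩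

theorem DoublyCommute.mul_left (ha : DoublyCommute a c) (hb : DoublyCommute b c) :
    DoublyCommute (a * b) c :=
  (ha.symm.mul_right hb.symm).symm

theorem Commute.doublyCommute_of_isSelfAdjoint (h : Commute a b) (hb : IsSelfAdjoint b) :
    DoublyCommute a b :=
  ⟨h, hb.star_eq.symm ▸ h⟩

theorem Commute.doublyCommute_of_mem_unitary (h : Commute a b) (hb : b ∈ unitary A) :
    DoublyCommute a b :=
  ⟨h, h.units_inv_right (u := Unitary.toUnits ⟨b, hb⟩)⟩

theorem doublyCommute_mul_mul {u c v d : A} (huv : Commute u v) (hud : Commute u d)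
    (hcv : Commute c v) (hcd : Commute c d) (hv : v ∈ unitary A) (hd : IsSelfAdjoint d) :
    DoublyCommute (u * c) (v * d) :=
  ((huv.doublyCommute_of_mem_unitary hv).mul_right
      (hud.doublyCommute_of_isSelfAdjoint hd)).mul_left
    ((hcv.doublyCommute_of_mem_unitary hv).mul_right (hcd.doublyCommute_of_isSelfAdjoint hd))

end DoublyCommute

theorem DoublyCommute.ringInverse_right {R : Type*} [Semiring R] [StarRing R] {a b : R}
    (h : DoublyCommute a b) : DoublyCommute a b⁻¹ʳ :=
  ⟨h.1.ringInverse_right, Ring.inverse_star b ▸ h.2.ringInverse_right⟩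

section PolarDecomposition

variable {A : Type*} [CStarAlgebra A] [PartialOrder A] [StarOrderedRing A] {a b : A}

noncomputable def polarUnitary (a : A) : A := a * (CFC.abs a)⁻¹ʳ

theorem isUnit_cfcAbs (ha : IsUnit a) : IsUnit (CFC.abs a) :=
  isUnit_mul_self_iff.mp (CFC.abs_mul_abs a ▸ ha.star.mul ha)

theorem polarUnitary_mul_cfcAbs (ha : IsUnit a) : polarUnitary a * CFC.abs a = a :=
  Ring.inverse_mul_cancel_right _ _ (isUnit_cfcAbs ha)

theorem polarUnitary_mem_unitary (ha : IsUnit a) : polarUnitary a ∈ unitary A := by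
  have hD := isUnit_cfcAbs ha
  refine (ha.mul hD.ringInverse).mem_unitary_of_star_mul_self ?_
  rw [star_mul, (CFC.abs_nonneg a).isSelfAdjoint.ringInverse.star_eq, mul_assoc,
    ← mul_assoc (star a), ← CFC.abs_mul_abs, Ring.mul_inverse_cancel_right _ _ hD,
    Ring.inverse_mul_cancel _ hD]

theorem DoublyCommute.cfcAbs_right (h : DoublyCommute a b) : DoublyCommute a (CFC.abs b) :=
  (h.symm.1.cfcAbs_right h.symm.2).doublyCommute_of_isSelfAdjoint
    (CFC.abs_nonneg b).isSelfAdjoint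

theorem DoublyCommute.polarUnitary_right (h : DoublyCommute a b) :
    DoublyCommute a (polarUnitary b) :=
  h.mul_right h.cfcAbs_right.ringInverse_right

end PolarDecomposition

theorem spectrum_ringInverse {𝕜 A : Type*} [Field 𝕜] [Ring A] [Algebra 𝕜 A] {a : A}
    (ha : IsUnit a) : spectrum 𝕜 a⁻¹ʳ = (spectrum 𝕜 a)⁻¹ := by
  obtain ⟨u, rfl⟩ := ha
  rw [Ring.inverse_unit, spectrum.map_inv]

theorem spectrum_subset_annulus_of_norm_le {A : Type*} [CStarAlgebra A] {a : A} {r : ℝ}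
    (ha : IsUnit a) (h₁ : ‖a‖ ≤ 1) (h₂ : ‖(r : ℂ) • a⁻¹ʳ‖ ≤ 1) : spectrum ℂ a ⊆ {z : ℂ | r ≤ ‖z‖ ∧ ‖z‖ ≤ 1} := by
  nontriviality A
  intro z hz
  have hz0 : 0 < ‖z‖ := norm_pos_iff.mpr fun h => spectrum.zero_notMem ℂ ha (h ▸ hz)
  have hinv : ‖z‖⁻¹ ≤ ‖a⁻¹ʳ‖ := by
    rw [← norm_inv]
    exact spectrum.norm_le_norm_of_mem (by simpa [spectrum_ringInverse ha] using hz)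
  rw [norm_smul, Complex.norm_real, Real.norm_eq_abs] at h₂
  refine ⟨?_, (spectrum.norm_le_norm_of_mem hz).trans h₁⟩
  calc r ≤ |r| * ‖z‖⁻¹ * ‖z‖ := by rw [inv_mul_cancel_right₀ hz0.ne']; exact le_abs_self r
    _ ≤ 1 * ‖z‖ := by gcongr; exact (mul_le_mul_of_nonneg_left hinv (abs_nonneg r)).trans h₂
    _ = ‖z‖ := one_mul _

theorem IsSelfAdjoint.norm_le_of_forall_mem_spectrum {A : Type*} [CStarAlgebra A] {a : A}
    (ha : IsSelfAdjoint a) {c : ℝ} (hc : 0 ≤ c) (h : ∀ z ∈ spectrum ℂ a, ‖z‖ ≤ c) : ‖a‖ ≤ c := by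
  lift c to NNReal using hc
  rw [← coe_nnnorm, NNReal.coe_le_coe, ← ENNReal.coe_le_coe, ← ha.spectralRadius_eq_nnnorm]
  exact iSup₂_le fun z hz => ENNReal.coe_le_coe.mpr (h z hz)

theorem memC1r_iff_spectrum_subset {r : ℝ} (hr : 0 < r) {D : H →L[ℂ] H}
    (hD : IsSelfAdjoint D) : MemC1r r D ↔ spectrum ℂ D ⊆ {z : ℂ | r ≤ ‖z‖ ∧ ‖z‖ ≤ 1} := by
  refine ⟨fun h => spectrum_subset_annulus_of_norm_le h.1 h.2.1 h.2.2, fun h => ?_⟩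
  have hunit : IsUnit D := spectrum.isUnit_of_zero_notMem ℂ fun h0 => by
    simpa using hr.trans_le (h h0).1
  have hinv : ‖D⁻¹ʳ‖ ≤ r⁻¹ :=
    hD.ringInverse.norm_le_of_forall_mem_spectrum (by positivity) fun z hz => by
      rw [spectrum_ringInverse hunit] at hz
      have hrz : r ≤ ‖z‖⁻¹ := norm_inv z ▸ (h hz).1
      exact (le_inv_comm₀ hr (inv_pos.mp (hr.trans_le hrz))).mp hrz
  refine ⟨hunit, hD.norm_le_of_forall_mem_spectrum zero_le_one fun z hz => (h hz).2, ?_⟩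
  rw [norm_smul, Complex.norm_real, Real.norm_of_nonneg hr.le]
  calc r * ‖D⁻¹ʳ‖ ≤ r * r⁻¹ := by gcongr
    _ = 1 := mul_inv_cancel₀ hr.ne'

theorem memC1r_unitary_mul_iff {r : ℝ} {U D : H →L[ℂ] H} (hU : U ∈ unitary (H →L[ℂ] H)) :
    MemC1r r (U * D) ↔ MemC1r r D := by
  let u := Unitary.toUnits ⟨U, hU⟩
  have hinv : (U * D)⁻¹ʳ = D⁻¹ʳ * star U := by
    rw [Ring.inverse_mul (a := U) (Or.inl u.isUnit)]
    exact congrArg (D⁻¹ʳ * ·) (Ring.inverse_unit u)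
  rw [MemC1r, MemC1r, hinv, ← smul_mul_assoc, CStarRing.norm_mem_unitary_mul _ hU,
    CStarRing.norm_mul_mem_unitary _ (Unitary.star_mem hU)]
  exact and_congr_left' (u.isUnit_units_mul D)

theorem memC1r_iff_spectrum_cfcAbs_subset {r : ℝ} (hr : 0 < r) {T : H →L[ℂ] H}
    (hT : IsUnit T) : MemC1r r T ↔ spectrum ℂ (CFC.abs T) ⊆ {z : ℂ | r ≤ ‖z‖ ∧ ‖z‖ ≤ 1} := by
  conv_lhs => rw [← polarUnitary_mul_cfcAbs hT]
  exact (memC1r_unitary_mul_iff (U := polarUnitary T) (D := CFC.abs T)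
    (polarUnitary_mem_unitary hT)).trans
    (memC1r_iff_spectrum_subset hr (CFC.abs_nonneg T).isSelfAdjoint)

theorem doublyCommuting_iff {d : ℕ} (T : Fin d → H →L[ℂ] H) :
    DoublyCommuting T ↔ ∀ i j, i ≠ j → DoublyCommute (T i) (T j) :=
  Iff.rfl

theorem stmt17_general (r : ℝ) (hr0 : 0 < r) (d : ℕ) (T : Fin d → H →L[ℂ] H) :
    (DoublyCommuting T ∧ ∀ i, MemC1r r (T i)) ↔
      ∃ U D : Fin d → H →L[ℂ] H,
        (∀ i, U i ∈ unitary (H →L[ℂ] H)) ∧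
        (∀ i j, U i * U j = U j * U i) ∧
        (∀ i, IsSelfAdjoint (D i)) ∧ (∀ i, IsUnit (D i)) ∧
        (∀ i j, D i * D j = D j * D i) ∧
        (∀ j, spectrum ℂ (D j) ⊆ {z : ℂ | r ≤ ‖z‖ ∧ ‖z‖ ≤ 1}) ∧
        (∀ i j, i ≠ j → D i * U j = U j * D i) ∧
        (∀ j, T j = U j * D j) := by
  rw [doublyCommuting_iff]
  constructor
  · rintro ⟨hT, hC⟩
    have hunit i : IsUnit (T i) := (hC i).1
    have hpolar j : T j = polarUnitary (T j) * CFC.abs (T j) :=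
      (polarUnitary_mul_cfcAbs (hunit j)).symm
    refine ⟨fun i => polarUnitary (T i), fun i => CFC.abs (T i),
      fun i => polarUnitary_mem_unitary (hunit i), fun i j => ?_,
      fun i => (CFC.abs_nonneg _).isSelfAdjoint,
      fun i => isUnit_cfcAbs (hunit i), fun i j => ?_, fun j => ?_,
      fun i j hij => ((hT j i hij.symm).cfcAbs_right.symm.polarUnitary_right).1, hpolar⟩
    · rcases eq_or_ne i j with rfl | hij
      · rfl
      · exact ((hT j i hij.symm).polarUnitary_right.symm.polarUnitary_right).1
    · rcases eq_or_ne i j with rfl | hij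
      · rfl
      · exact ((hT j i hij.symm).cfcAbs_right.symm.cfcAbs_right).1
    · exact (memC1r_iff_spectrum_cfcAbs_subset hr0 (hunit j)).mp (hC j)
  · rintro ⟨U, D, hU, hUU, hD, -, hDD, hσ, hDU, hTUD⟩
    obtain rfl : T = fun j => U j * D j := funext hTUD
    refine ⟨fun i j hij => doublyCommute_mul_mul (hUU i j) (hDU j i hij.symm).symm
      (hDU i j hij) (hDD i j) (hU j) (hD j), fun j => ?_⟩
    exact (memC1r_unitary_mul_iff (hU j)).mpr ((memC1r_iff_spectrum_subset hr0 (hD j)).mpr (hσ j))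

theorem stmt17 (r : ℝ) (hr0 : 0 < r) (hr1 : r < 1) (d : ℕ) (T : Fin d → H →L[ℂ] H)
    (hu : ∀ i, IsUnit (T i)) :
    (DoublyCommuting T ∧ ∀ i, MemC1r r (T i)) ↔
      ∃ U D : Fin d → H →L[ℂ] H,
        (∀ i, U i ∈ unitary (H →L[ℂ] H)) ∧
        (∀ i j, U i * U j = U j * U i) ∧
        (∀ i, IsSelfAdjoint (D i)) ∧ (∀ i, IsUnit (D i)) ∧
        (∀ i j, D i * D j = D j * D i) ∧
        (∀ j, spectrum ℂ (D j) ⊆ {z : ℂ | r ≤ ‖z‖ ∧ ‖z‖ ≤ 1}) ∧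
        (∀ i j, i ≠ j → D i * U j = U j * D i) ∧
        (∀ j, T j = U j * D j) :=
  stmt17_general r hr0 d T
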